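/- arXiv:2309.03017 — 4 statements merged into one kernel-verified Lean document; each statement's English description precedes it below -/
import Mathlib

section
/- If ψ: S² → G(2,n;ℝ) is the real mixed pair ψ = conj(f₀) ⊕ f₀, where f₀: S² → ℂP^m is a linearly full holomorphic curve with induced metric l₀ dz dz̄, then the induced metric of ψ is ds² = 2 l₀ dz dz̄; consequently, if f₀ has constant curvature (hence is a Veronese curve with l₀ = m/(1+|z|²)²), then ψ has constant Gaussian curvature K = 2/m. -/
open Matrix

/-- Wirtinger derivative `∂/∂z`. -/
noncomputable def wirt (f : ℂ → ℂ) (z : ℂ) : ℂ :=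
  (1 / 2) * (fderiv ℝ f z 1 - Complex.I * fderiv ℝ f z Complex.I)

/-- Wirtinger derivative `∂/∂z̄`. -/
noncomputable def wirtbar (f : ℂ → ℂ) (z : ℂ) : ℂ :=
  (1 / 2) * (fderiv ℝ f z 1 + Complex.I * fderiv ℝ f z Complex.I)


section lemmas
variable {f g : ℂ → ℂ} {z : ℂ}

theorem wirt_congr (h : f = g) : wirt f z = wirt g z := by rw [h]

theorem wirtbar_congr (h : f = g) : wirtbar f z = wirtbar g z := by rw [h]

theorem wirt_add (hf : DifferentiableAt ℝ f z) (hg : DifferentiableAt ℝ g z) :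
    wirt (fun w => f w + g w) z = wirt f z + wirt g z := by
  simp only [wirt, fderiv_fun_add hf hg]; simp; ring

theorem wirtbar_add (hf : DifferentiableAt ℝ f z) (hg : DifferentiableAt ℝ g z) :
    wirtbar (fun w => f w + g w) z = wirtbar f z + wirtbar g z := by
  simp only [wirtbar, fderiv_fun_add hf hg]; simp; ring

theorem wirt_mul (hf : DifferentiableAt ℝ f z) (hg : DifferentiableAt ℝ g z) :
    wirt (fun w => f w * g w) z = wirt f z * g z + f z * wirt g z := by
  simp only [wirt, fderiv_fun_mul hf hg]; simp [smul_eq_mul]; ring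

theorem wirtbar_mul (hf : DifferentiableAt ℝ f z) (hg : DifferentiableAt ℝ g z) :
    wirtbar (fun w => f w * g w) z = wirtbar f z * g z + f z * wirtbar g z := by
  simp only [wirtbar, fderiv_fun_mul hf hg]; simp [smul_eq_mul]; ring

theorem wirt_const (c : ℂ) : wirt (fun _ => c) z = 0 := by
  simp [wirt, fderiv_const]

theorem wirtbar_const (c : ℂ) : wirtbar (fun _ => c) z = 0 := by
  simp [wirtbar, fderiv_const]

theorem wirt_sum {ι : Type*} (s : Finset ι) (f : ι → ℂ → ℂ)
    (hf : ∀ i ∈ s, DifferentiableAt ℝ (f i) z) :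
    wirt (fun w => ∑ i ∈ s, f i w) z = ∑ i ∈ s, wirt (f i) z := by
  simp only [wirt, fderiv_fun_sum hf, ContinuousLinearMap.sum_apply, Finset.mul_sum]
  rw [← Finset.sum_sub_distrib, Finset.mul_sum]

theorem wirtbar_sum {ι : Type*} (s : Finset ι) (f : ι → ℂ → ℂ)
    (hf : ∀ i ∈ s, DifferentiableAt ℝ (f i) z) :
    wirtbar (fun w => ∑ i ∈ s, f i w) z = ∑ i ∈ s, wirtbar (f i) z := by
  simp only [wirtbar, fderiv_fun_sum hf, ContinuousLinearMap.sum_apply, Finset.mul_sum]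
  rw [← Finset.sum_add_distrib, Finset.mul_sum]

theorem wirt_conj (hf : DifferentiableAt ℝ f z) :
    wirt (fun w => (starRingEnd ℂ) (f w)) z = (starRingEnd ℂ) (wirtbar f z) := by
  have h : fderiv ℝ (fun w => (starRingEnd ℂ) (f w)) z
      = Complex.conjCLE.toContinuousLinearMap.comp (fderiv ℝ f z) := by
    have := (Complex.conjCLE.toContinuousLinearMap.hasFDerivAt (x := f z)).comp z hf.hasFDerivAt
    exact this.fderiv
  simp only [wirt, wirtbar, h, ContinuousLinearMap.comp_apply]
  simp [Complex.conjCLE, map_ofNat]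
  ring

theorem wirtbar_conj (hf : DifferentiableAt ℝ f z) :
    wirtbar (fun w => (starRingEnd ℂ) (f w)) z = (starRingEnd ℂ) (wirt f z) := by
  have h : fderiv ℝ (fun w => (starRingEnd ℂ) (f w)) z
      = Complex.conjCLE.toContinuousLinearMap.comp (fderiv ℝ f z) := by
    have := (Complex.conjCLE.toContinuousLinearMap.hasFDerivAt (x := f z)).comp z hf.hasFDerivAt
    exact this.fderiv
  simp only [wirt, wirtbar, h, ContinuousLinearMap.comp_apply]
  simp [Complex.conjCLE, map_ofNat, map_add, mul_comm]

theorem wirt_holo (hf : DifferentiableAt ℂ f z) : wirt f z = deriv f z := by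
  have h : fderiv ℝ f z = (fderiv ℂ f z).restrictScalars ℝ := (hf.hasFDerivAt.restrictScalars ℝ).fderiv
  have h1 : fderiv ℂ f z 1 = deriv f z := by rw [fderiv_apply_one_eq_deriv]
  have hI : fderiv ℂ f z Complex.I = Complex.I * deriv f z := by
    have := (fderiv ℂ f z).map_smul Complex.I (1 : ℂ)
    simpa [h1, smul_eq_mul] using this
  simp [wirt, h, h1, hI]
  linear_combination (-(deriv f z)/2) * Complex.I_sq

theorem wirtbar_holo (hf : DifferentiableAt ℂ f z) : wirtbar f z = 0 := by
  have h : fderiv ℝ f z = (fderiv ℂ f z).restrictScalars ℝ := (hf.hasFDerivAt.restrictScalars ℝ).fderiv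
  have h1 : fderiv ℂ f z 1 = deriv f z := by rw [fderiv_apply_one_eq_deriv]
  have hI : fderiv ℂ f z Complex.I = Complex.I * deriv f z := by
    have := (fderiv ℂ f z).map_smul Complex.I (1 : ℂ)
    simpa [h1, smul_eq_mul] using this
  simp [wirtbar, h, h1, hI]
  linear_combination (deriv f z) * Complex.I_sq


theorem fderiv_comp_holo (g : ℂ → ℂ) (hg : DifferentiableAt ℂ g (f z))
    (hf : DifferentiableAt ℝ f z) (u : ℂ) :
    fderiv ℝ (fun w => g (f w)) z u = deriv g (f z) * fderiv ℝ f z u := by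
  have h : HasFDerivAt (fun w => g (f w))
      (((fderiv ℂ g (f z)).restrictScalars ℝ).comp (fderiv ℝ f z)) z :=
    (hg.hasFDerivAt.restrictScalars ℝ).comp z hf.hasFDerivAt
  rw [h.fderiv]
  have key : fderiv ℂ g (f z) (fderiv ℝ f z u) = deriv g (f z) * fderiv ℝ f z u := by
    have := (fderiv ℂ g (f z)).map_smul (fderiv ℝ f z u) (1 : ℂ)
    simpa [smul_eq_mul, fderiv_apply_one_eq_deriv, mul_comm] using this
  simpa using key

theorem wirt_comp (g : ℂ → ℂ) (hg : DifferentiableAt ℂ g (f z))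
    (hf : DifferentiableAt ℝ f z) :
    wirt (fun w => g (f w)) z = deriv g (f z) * wirt f z := by
  simp [wirt, fderiv_comp_holo g hg hf]; ring

theorem wirtbar_comp (g : ℂ → ℂ) (hg : DifferentiableAt ℂ g (f z))
    (hf : DifferentiableAt ℝ f z) :
    wirtbar (fun w => g (f w)) z = deriv g (f z) * wirtbar f z := by
  simp [wirtbar, fderiv_comp_holo g hg hf]; ring

theorem wirt_inv (hf : DifferentiableAt ℝ f z) (h0 : f z ≠ 0) :
    wirt (fun w => (f w)⁻¹) z = -wirt f z / f z ^ 2 := by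
  rw [wirt_comp Inv.inv (differentiableAt_inv (𝕜 := ℂ) h0) hf]
  rw [deriv_inv]; field_simp

theorem wirtbar_inv (hf : DifferentiableAt ℝ f z) (h0 : f z ≠ 0) :
    wirtbar (fun w => (f w)⁻¹) z = -wirtbar f z / f z ^ 2 := by
  rw [wirtbar_comp Inv.inv (differentiableAt_inv (𝕜 := ℂ) h0) hf]
  rw [deriv_inv]; field_simp

theorem diffAt_conj (hf : DifferentiableAt ℝ f z) :
    DifferentiableAt ℝ (fun w => (starRingEnd ℂ) (f w)) z :=
  Complex.conjCLE.toContinuousLinearMap.differentiable.differentiableAt.comp z hf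

theorem diffAt_inv (hf : DifferentiableAt ℝ f z) (h0 : f z ≠ 0) :
    DifferentiableAt ℝ (fun w => (f w)⁻¹) z :=
  ((differentiableAt_inv (𝕜 := ℂ) h0).restrictScalars ℝ).comp z hf

theorem wirtbar_log_ofReal (g : ℂ → ℝ) (hg : DifferentiableAt ℝ g z) (hpos : 0 < g z) :
    wirtbar (fun w => ((Real.log (g w) : ℝ) : ℂ)) z
      = wirtbar (fun w => ((g w : ℝ) : ℂ)) z / (g z : ℂ) := by
  have h1 : HasFDerivAt (fun w => Real.log (g w)) ((g z)⁻¹ • fderiv ℝ g z) z :=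
    (Real.hasDerivAt_log hpos.ne').comp_hasFDerivAt z hg.hasFDerivAt
  have h2 : HasFDerivAt (fun w => ((Real.log (g w) : ℝ) : ℂ))
      (Complex.ofRealCLM.comp ((g z)⁻¹ • fderiv ℝ g z)) z :=
    Complex.ofRealCLM.hasFDerivAt.comp z h1
  have h3 : HasFDerivAt (fun w => ((g w : ℝ) : ℂ))
      (Complex.ofRealCLM.comp (fderiv ℝ g z)) z :=
    Complex.ofRealCLM.hasFDerivAt.comp z hg.hasFDerivAt
  have hgz : (g z : ℂ) ≠ 0 := by exact_mod_cast hpos.ne'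
  rw [wirtbar, wirtbar, h2.fderiv, h3.fderiv]
  simp only [ContinuousLinearMap.comp_apply, ContinuousLinearMap.smul_apply,
    Complex.ofRealCLM_apply, smul_eq_mul, Complex.ofReal_mul, Complex.ofReal_inv]
  field_simp

end lemmas

theorem sum9 {n : ℕ} (x1 x2 x3 y1 y2 y3 : Fin n → ℂ) (A B C A' B' C' : ℂ) :
    ∑ k, (A * x1 k + B * x2 k + C * x3 k) * (A' * y1 k + B' * y2 k + C' * y3 k)
      = A * A' * (∑ k, x1 k * y1 k) + A * B' * (∑ k, x1 k * y2 k) + A * C' * (∑ k, x1 k * y3 k)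
      + B * A' * (∑ k, x2 k * y1 k) + B * B' * (∑ k, x2 k * y2 k) + B * C' * (∑ k, x2 k * y3 k)
      + C * A' * (∑ k, x3 k * y1 k) + C * B' * (∑ k, x3 k * y2 k) + C * C' * (∑ k, x3 k * y3 k) := by
  rw [Finset.sum_congr rfl (fun k _ => show _ =
      A * A' * (x1 k * y1 k) + A * B' * (x1 k * y2 k) + A * C' * (x1 k * y3 k)
      + B * A' * (x2 k * y1 k) + B * B' * (x2 k * y2 k) + B * C' * (x2 k * y3 k)
      + C * A' * (x3 k * y1 k) + C * B' * (x3 k * y2 k) + C * C' * (x3 k * y3 k) by ring)]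
  simp only [Finset.sum_add_distrib, Finset.mul_sum]

namespace MixedPairAux

variable {n : ℕ} (F : ℂ → Fin n → ℂ)

noncomputable def Nfun : ℂ → ℂ := fun w => ∑ k, F w k * (starRingEnd ℂ) (F w k)
noncomputable def afun : ℂ → ℂ := fun w => ∑ k, deriv (fun u => F u k) w * (starRingEnd ℂ) (F w k)

theorem Nfun_cast (w : ℂ) : ((∑ i, Complex.normSq (F w i) : ℝ) : ℂ) = Nfun F w := by
  push_cast [Nfun]
  exact Finset.sum_congr rfl fun i _ => (Complex.mul_conj (F w i)).symm

theorem nsq_pos (hnz : ∀ z, F z ≠ 0) (w : ℂ) : 0 < ∑ i, Complex.normSq (F w i) := by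
  obtain ⟨k, hk⟩ := Function.ne_iff.mp (hnz w)
  exact Finset.sum_pos' (fun i _ => Complex.normSq_nonneg _)
    ⟨k, Finset.mem_univ k, Complex.normSq_pos.mpr hk⟩

theorem Nfun_ne (hnz : ∀ z, F z ≠ 0) (w : ℂ) : Nfun F w ≠ 0 := by
  rw [← Nfun_cast]
  exact_mod_cast (nsq_pos F hnz w).ne'

section diff
variable (hhol : ∀ i, Differentiable ℂ fun z => F z i)
include hhol

theorem diffF (i : Fin n) (w : ℂ) : DifferentiableAt ℝ (fun u => F u i) w :=
  ((hhol i) w).restrictScalars ℝ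

theorem diffConjF (i : Fin n) (w : ℂ) :
    DifferentiableAt ℝ (fun u => (starRingEnd ℂ) (F u i)) w :=
  diffAt_conj (diffF F hhol i w)

theorem diffN (w : ℂ) : DifferentiableAt ℝ (Nfun F) w :=
  DifferentiableAt.fun_sum fun k _ => (diffF F hhol k w).fun_mul (diffConjF F hhol k w)

theorem derivF_hol (i : Fin n) : Differentiable ℂ (deriv (fun u => F u i)) := by
  have h : AnalyticOnNhd ℂ (fun u => F u i) Set.univ :=
    (hhol i).differentiableOn.analyticOnNhd isOpen_univ
  exact fun z => (h.deriv z (Set.mem_univ z)).differentiableAt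

theorem diffa (w : ℂ) : DifferentiableAt ℝ (afun F) w :=
  DifferentiableAt.fun_sum fun k _ =>
    ((derivF_hol F hhol k w).restrictScalars ℝ).fun_mul (diffConjF F hhol k w)

theorem wirtF (i : Fin n) (w : ℂ) :
    wirt (fun u => F u i) w = deriv (fun u => F u i) w := wirt_holo ((hhol i) w)

theorem wirtbarF (i : Fin n) (w : ℂ) : wirtbar (fun u => F u i) w = 0 :=
  wirtbar_holo ((hhol i) w)

theorem wirt_conjF (i : Fin n) (w : ℂ) :
    wirt (fun u => (starRingEnd ℂ) (F u i)) w = 0 := by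
  rw [wirt_conj (diffF F hhol i w), wirtbarF F hhol i w, map_zero]

theorem wirtbar_conjF (i : Fin n) (w : ℂ) :
    wirtbar (fun u => (starRingEnd ℂ) (F u i)) w
      = (starRingEnd ℂ) (deriv (fun u => F u i) w) := by
  rw [wirtbar_conj (diffF F hhol i w), wirtF F hhol i w]

theorem wirtN (w : ℂ) : wirt (Nfun F) w = afun F w := by
  unfold Nfun
  rw [wirt_sum Finset.univ _ (fun k _ => (diffF F hhol k w).fun_mul (diffConjF F hhol k w))]
  refine Finset.sum_congr rfl fun k _ => ?_
  rw [wirt_mul (diffF F hhol k w) (diffConjF F hhol k w), wirtF F hhol k w,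
    wirt_conjF F hhol k w, mul_zero, add_zero]

theorem wirtbarN (w : ℂ) : wirtbar (Nfun F) w = (starRingEnd ℂ) (afun F w) := by
  unfold Nfun
  rw [wirtbar_sum Finset.univ _ (fun k _ => (diffF F hhol k w).fun_mul (diffConjF F hhol k w))]
  unfold afun
  rw [map_sum]
  refine Finset.sum_congr rfl fun k _ => ?_
  rw [wirtbar_mul (diffF F hhol k w) (diffConjF F hhol k w), wirtbarF F hhol k w,
    wirtbar_conjF F hhol k w, zero_mul, zero_add, _root_.map_mul, Complex.conj_conj, mul_comm]

theorem wirtbar_afun (w : ℂ) :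
    wirtbar (afun F) w
      = ∑ k, deriv (fun u => F u k) w * (starRingEnd ℂ) (deriv (fun u => F u k) w) := by
  unfold afun
  rw [wirtbar_sum Finset.univ _ (fun k _ =>
    ((derivF_hol F hhol k w).restrictScalars ℝ).fun_mul (diffConjF F hhol k w))]
  refine Finset.sum_congr rfl fun k _ => ?_
  rw [wirtbar_mul ((derivF_hol F hhol k w).restrictScalars ℝ) (diffConjF F hhol k w),
    wirtbar_holo ((derivF_hol F hhol k) w), wirtbar_conjF F hhol k w, zero_mul, zero_add]

theorem diff_conja (w : ℂ) :
    DifferentiableAt ℝ (fun u => (starRingEnd ℂ) (afun F u)) w :=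
  diffAt_conj (diffa F hhol w)

noncomputable def bfun : ℂ → ℂ :=
  fun w => ∑ k, deriv (fun u => F u k) w * (starRingEnd ℂ) (deriv (fun u => F u k) w)

noncomputable def psiE (w : ℂ) (i j : Fin n) : ℂ :=
  (Nfun F w)⁻¹ * (F w i * (starRingEnd ℂ) (F w j) + (starRingEnd ℂ) (F w i) * F w j)

theorem diffG (i j : Fin n) (w : ℂ) :
    DifferentiableAt ℝ
      (fun u => F u i * (starRingEnd ℂ) (F u j) + (starRingEnd ℂ) (F u i) * F u j) w :=
  ((diffF F hhol i w).fun_mul (diffConjF F hhol j w)).add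
    ((diffConjF F hhol i w).fun_mul (diffF F hhol j w))

theorem diff_psiE (hnz : ∀ z, F z ≠ 0) (i j : Fin n) (w : ℂ) :
    DifferentiableAt ℝ (fun u => psiE F u i j) w :=
  (diffAt_inv (diffN F hhol w) (Nfun_ne F hnz w)).mul (diffG F hhol i j w)

theorem wirt_psi (hnz : ∀ z, F z ≠ 0) (i j : Fin n) (z : ℂ) :
    wirt (fun w => psiE F w i j) z
      = (Nfun F z)⁻¹ * (deriv (fun u => F u i) z * (starRingEnd ℂ) (F z j)
          + (starRingEnd ℂ) (F z i) * deriv (fun u => F u j) z)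
        - afun F z * ((Nfun F z)⁻¹ * (Nfun F z)⁻¹)
          * (F z i * (starRingEnd ℂ) (F z j) + (starRingEnd ℂ) (F z i) * F z j) := by
  unfold psiE
  rw [wirt_mul (diffAt_inv (diffN F hhol z) (Nfun_ne F hnz z)) (diffG F hhol i j z)]
  rw [wirt_inv (diffN F hhol z) (Nfun_ne F hnz z), wirtN F hhol z]
  rw [wirt_add ((diffF F hhol i z).fun_mul (diffConjF F hhol j z))
    ((diffConjF F hhol i z).fun_mul (diffF F hhol j z))]
  rw [wirt_mul (diffF F hhol i z) (diffConjF F hhol j z),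
    wirt_mul (diffConjF F hhol i z) (diffF F hhol j z)]
  rw [wirtF F hhol i z, wirtF F hhol j z, wirt_conjF F hhol i z, wirt_conjF F hhol j z]
  have hNz := Nfun_ne F hnz z
  field_simp
  ring

theorem wirtbar_psi (hnz : ∀ z, F z ≠ 0) (i j : Fin n) (z : ℂ) :
    wirtbar (fun w => psiE F w i j) z
      = (Nfun F z)⁻¹ * (F z i * (starRingEnd ℂ) (deriv (fun u => F u j) z)
          + (starRingEnd ℂ) (deriv (fun u => F u i) z) * F z j)
        - (starRingEnd ℂ) (afun F z) * ((Nfun F z)⁻¹ * (Nfun F z)⁻¹)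
          * (F z i * (starRingEnd ℂ) (F z j) + (starRingEnd ℂ) (F z i) * F z j) := by
  unfold psiE
  rw [wirtbar_mul (diffAt_inv (diffN F hhol z) (Nfun_ne F hnz z)) (diffG F hhol i j z)]
  rw [wirtbar_inv (diffN F hhol z) (Nfun_ne F hnz z), wirtbarN F hhol z]
  rw [wirtbar_add ((diffF F hhol i z).fun_mul (diffConjF F hhol j z))
    ((diffConjF F hhol i z).fun_mul (diffF F hhol j z))]
  rw [wirtbar_mul (diffF F hhol i z) (diffConjF F hhol j z),
    wirtbar_mul (diffConjF F hhol i z) (diffF F hhol j z)]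
  rw [wirtbarF F hhol i z, wirtbarF F hhol j z, wirtbar_conjF F hhol i z,
    wirtbar_conjF F hhol j z]
  have hNz := Nfun_ne F hnz z
  field_simp
  ring

omit hhol in
theorem nsq_eq_re (w : ℂ) : (∑ i, Complex.normSq (F w i)) = (Nfun F w).re := by
  rw [← Nfun_cast]; simp

theorem diff_nsq (w : ℂ) :
    DifferentiableAt ℝ (fun u => ∑ i, Complex.normSq (F u i)) w := by
  have : (fun u => ∑ i, Complex.normSq (F u i)) = fun u => (Nfun F u).re :=
    funext fun u => nsq_eq_re F u
  rw [this]
  exact Complex.reCLM.differentiable.differentiableAt.comp w (diffN F hhol w)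

theorem wirtbar_logN (hnz : ∀ z, F z ≠ 0) :
    wirtbar (fun u => ((Real.log (∑ i, Complex.normSq (F u i)) : ℝ) : ℂ))
      = fun w => (starRingEnd ℂ) (afun F w) * (Nfun F w)⁻¹ := by
  funext w
  rw [wirtbar_log_ofReal _ (diff_nsq F hhol w) (nsq_pos F hnz w)]
  have h1 : (fun u => ((∑ i, Complex.normSq (F u i) : ℝ) : ℂ)) = Nfun F :=
    funext fun u => Nfun_cast F u
  rw [h1, wirtbarN F hhol w, Nfun_cast F w, div_eq_mul_inv]

theorem l0_val (hnz : ∀ z, F z ≠ 0) (z : ℂ) :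
    wirt (wirtbar (fun u => ((Real.log (∑ i, Complex.normSq (F u i)) : ℝ) : ℂ))) z
      = bfun F z * (Nfun F z)⁻¹
        - (starRingEnd ℂ) (afun F z) * afun F z * ((Nfun F z)⁻¹ * (Nfun F z)⁻¹) := by
  rw [wirtbar_logN F hhol hnz]
  rw [wirt_mul (diff_conja F hhol z) (diffAt_inv (diffN F hhol z) (Nfun_ne F hnz z))]
  rw [wirt_inv (diffN F hhol z) (Nfun_ne F hnz z), wirtN F hhol z]
  rw [wirt_conj (diffa F hhol z), wirtbar_afun F hhol z]
  have hb : (starRingEnd ℂ)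
      (∑ k, deriv (fun u => F u k) z * (starRingEnd ℂ) (deriv (fun u => F u k) z))
      = bfun F z := by
    unfold bfun
    rw [map_sum]
    exact Finset.sum_congr rfl fun k _ => by
      rw [_root_.map_mul, Complex.conj_conj, mul_comm]
  rw [hb]
  have hNz := Nfun_ne F hnz z
  field_simp
  ring

noncomputable def df (z : ℂ) (k : Fin n) : ℂ := deriv (fun u => F u k) z
noncomputable def qf (z : ℂ) (k : Fin n) : ℂ := (starRingEnd ℂ) (F z k)
noncomputable def ef (z : ℂ) (k : Fin n) : ℂ := (starRingEnd ℂ) (df F z k)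

omit hhol in
theorem Spq (z : ℂ) : ∑ k, F z k * qf F z k = Nfun F z := rfl

omit hhol in
theorem Sqp (z : ℂ) : ∑ k, qf F z k * F z k = Nfun F z := by
  rw [← Spq F z]; exact Finset.sum_congr rfl fun k _ => mul_comm _ _

omit hhol in
theorem Sqq (hiso : ∀ z, ∑ i, F z i * F z i = 0) (z : ℂ) :
    ∑ k, qf F z k * qf F z k = 0 := by
  have := congrArg (starRingEnd ℂ) (hiso z)
  rw [map_sum, map_zero] at this
  simpa [qf] using this

theorem Sdq (z : ℂ) : ∑ k, df F z k * qf F z k = afun F z := rfl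

theorem Sde (z : ℂ) : ∑ k, df F z k * ef F z k = bfun F z := rfl

theorem Spe (z : ℂ) : ∑ k, F z k * ef F z k = (starRingEnd ℂ) (afun F z) := by
  have := congrArg (starRingEnd ℂ) (Sdq F hhol z)
  rw [map_sum] at this
  rw [← this]
  exact Finset.sum_congr rfl fun k _ => by simp [df, qf, ef, mul_comm]

theorem Sdp (hiso : ∀ z, ∑ i, F z i * F z i = 0) (z : ℂ) :
    ∑ k, df F z k * F z k = 0 := by
  have hsum : HasDerivAt (fun w => ∑ k, F w k * F w k)
      (∑ k, (df F z k * F z k + F z k * df F z k)) z :=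
    HasDerivAt.fun_sum fun k _ =>
      (((hhol k) z).hasDerivAt).mul (((hhol k) z).hasDerivAt)
  have h0 : (fun w => ∑ k, F w k * F w k) = fun _ => (0 : ℂ) := funext hiso
  rw [h0] at hsum
  have huniq := hsum.unique (hasDerivAt_const z 0)
  have h2 : ∑ k, (df F z k * F z k + F z k * df F z k)
      = (∑ k, df F z k * F z k) + ∑ k, df F z k * F z k := by
    rw [Finset.sum_add_distrib]
    congr 1
    exact Finset.sum_congr rfl fun k _ => mul_comm _ _
  rw [h2] at huniq
  exact add_self_eq_zero.mp huniq

theorem Spd (hiso : ∀ z, ∑ i, F z i * F z i = 0) (z : ℂ) :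
    ∑ k, F z k * df F z k = 0 := by
  rw [← Sdp F hhol hiso z]; exact Finset.sum_congr rfl fun k _ => mul_comm _ _

theorem Sqe (hiso : ∀ z, ∑ i, F z i * F z i = 0) (z : ℂ) :
    ∑ k, qf F z k * ef F z k = 0 := by
  have := congrArg (starRingEnd ℂ) (Sdp F hhol hiso z)
  rw [map_sum, map_zero] at this
  rw [← this]
  exact Finset.sum_congr rfl fun k _ => by simp [qf, ef, mul_comm]

theorem Sqd (z : ℂ) : ∑ k, qf F z k * df F z k = afun F z := by
  rw [← Sdq F hhol z]; exact Finset.sum_congr rfl fun k _ => mul_comm _ _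

omit hhol in
set_option maxHeartbeats 1000000 in
theorem psi2 (hnz : ∀ z, F z ≠ 0) (hiso : ∀ z, ∑ i, F z i * F z i = 0) (z : ℂ)
    (i j : Fin n) : ∑ k, psiE F z i k * psiE F z k j = psiE F z i j := by
  have hcalc : ∑ k, psiE F z i k * psiE F z k j
      = ∑ k, (((Nfun F z)⁻¹ * F z i) * qf F z k + (0:ℂ) * df F z k
            + ((Nfun F z)⁻¹ * qf F z i) * F z k)
          * ((qf F z j * (Nfun F z)⁻¹) * F z k + (0:ℂ) * ef F z k
            + (F z j * (Nfun F z)⁻¹) * qf F z k) :=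
    Finset.sum_congr rfl fun k _ => by unfold psiE qf; ring
  rw [hcalc, sum9, Sqp F z, Sqq F hiso z, Spq F z, hiso z]
  have hN := Nfun_ne F hnz z
  simp only [psiE, qf]
  generalize hts : (Nfun F z)⁻¹ = t
  have hN2 : Nfun F z = t⁻¹ := by rw [← hts, inv_inv]
  have ht : t ≠ 0 := by rw [← hts]; exact inv_ne_zero hN
  rw [hN2]
  field_simp
  ring

set_option maxHeartbeats 2000000 in
theorem psiD_comm (hnz : ∀ z, F z ≠ 0) (hiso : ∀ z, ∑ i, F z i * F z i = 0) (z : ℂ)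
    (i j : Fin n) :
    (∑ k, psiE F z i k * wirt (fun w => psiE F w k j) z)
      + (∑ k, wirt (fun w => psiE F w i k) z * psiE F z k j)
    = wirt (fun w => psiE F w i j) z := by
  have hN := Nfun_ne F hnz z
  have h1 : ∑ k, psiE F z i k * wirt (fun w => psiE F w k j) z
      = ∑ k, (((Nfun F z)⁻¹ * F z i) * qf F z k + (0:ℂ) * df F z k
            + ((Nfun F z)⁻¹ * qf F z i) * F z k)
          * (((Nfun F z)⁻¹ * qf F z j) * df F z k
            + ((Nfun F z)⁻¹ * df F z j
               - afun F z * ((Nfun F z)⁻¹ * (Nfun F z)⁻¹) * F z j) * qf F z k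
            + (-(afun F z * ((Nfun F z)⁻¹ * (Nfun F z)⁻¹) * qf F z j)) * F z k) :=
    Finset.sum_congr rfl fun k _ => by
      rw [wirt_psi F hhol hnz k j z]; simp only [psiE, qf, df]; ring
  have h2 : ∑ k, wirt (fun w => psiE F w i k) z * psiE F z k j
      = ∑ k, (((Nfun F z)⁻¹ * df F z i
               - afun F z * ((Nfun F z)⁻¹ * (Nfun F z)⁻¹) * F z i) * qf F z k
            + ((Nfun F z)⁻¹ * qf F z i) * df F z k
            + (-(afun F z * ((Nfun F z)⁻¹ * (Nfun F z)⁻¹) * qf F z i)) * F z k)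
          * (((Nfun F z)⁻¹ * qf F z j) * F z k + (0:ℂ) * ef F z k
            + ((Nfun F z)⁻¹ * F z j) * qf F z k) :=
    Finset.sum_congr rfl fun k _ => by
      rw [wirt_psi F hhol hnz i k z]; simp only [psiE, qf, df]; ring
  rw [h1, h2, sum9, sum9, Sqd F hhol z, Sqq F hiso z, Sqp F z, Spd F hhol hiso z,
    Spq F z, hiso z, Sdp F hhol hiso z, Sdq F hhol z, wirt_psi F hhol hnz i j z]
  simp only [psiE, qf, df]
  generalize hts : (Nfun F z)⁻¹ = t
  have hN2 : Nfun F z = t⁻¹ := by rw [← hts, inv_inv]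
  have ht : t ≠ 0 := by rw [← hts]; exact inv_ne_zero hN
  rw [hN2]
  field_simp
  ring

set_option maxHeartbeats 2000000 in
theorem trace_DD (hnz : ∀ z, F z ≠ 0) (hiso : ∀ z, ∑ i, F z i * F z i = 0) (z : ℂ) :
    ∑ i, ∑ k, wirt (fun w => psiE F w i k) z * wirtbar (fun w => psiE F w k i) z
      = 2 * (bfun F z * (Nfun F z)⁻¹
        - (starRingEnd ℂ) (afun F z) * afun F z * ((Nfun F z)⁻¹ * (Nfun F z)⁻¹)) := by
  have hN := Nfun_ne F hnz z
  have inner : ∀ i, ∑ k, wirt (fun w => psiE F w i k) z * wirtbar (fun w => psiE F w k i) z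
      = (Nfun F z)⁻¹ * (df F z i * ef F z i)
        - (starRingEnd ℂ) (afun F z) * ((Nfun F z)⁻¹ * (Nfun F z)⁻¹) * (df F z i * qf F z i)
        - afun F z * ((Nfun F z)⁻¹ * (Nfun F z)⁻¹) * (F z i * ef F z i)
        + afun F z * (starRingEnd ℂ) (afun F z)
            * ((Nfun F z)⁻¹ * (Nfun F z)⁻¹ * (Nfun F z)⁻¹) * (F z i * qf F z i)
        + (bfun F z * ((Nfun F z)⁻¹ * (Nfun F z)⁻¹)
            - afun F z * (starRingEnd ℂ) (afun F z)
              * ((Nfun F z)⁻¹ * (Nfun F z)⁻¹ * (Nfun F z)⁻¹)) * (qf F z i * F z i) := by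
    intro i
    have h2 : ∑ k, wirt (fun w => psiE F w i k) z * wirtbar (fun w => psiE F w k i) z
        = ∑ k, (((Nfun F z)⁻¹ * df F z i
                 - afun F z * ((Nfun F z)⁻¹ * (Nfun F z)⁻¹) * F z i) * qf F z k
              + ((Nfun F z)⁻¹ * qf F z i) * df F z k
              + (-(afun F z * ((Nfun F z)⁻¹ * (Nfun F z)⁻¹) * qf F z i)) * F z k)
            * (((Nfun F z)⁻¹ * ef F z i
                 - (starRingEnd ℂ) (afun F z) * ((Nfun F z)⁻¹ * (Nfun F z)⁻¹) * qf F z i) * F z k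
              + ((Nfun F z)⁻¹ * F z i) * ef F z k
              + (-((starRingEnd ℂ) (afun F z)
                  * ((Nfun F z)⁻¹ * (Nfun F z)⁻¹) * F z i)) * qf F z k) :=
      Finset.sum_congr rfl fun k _ => by
        rw [wirt_psi F hhol hnz i k z, wirtbar_psi F hhol hnz k i z]
        simp only [psiE, qf, df, ef]; ring
    rw [h2, sum9, Sqp F z, Sqe F hhol hiso z, Sqq F hiso z, Sdp F hhol hiso z,
      Sde F hhol z, Sdq F hhol z, hiso z, Spe F hhol z, Spq F z]
    generalize hts : (Nfun F z)⁻¹ = t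
    have hN2 : Nfun F z = t⁻¹ := by rw [← hts, inv_inv]
    have ht : t ≠ 0 := by rw [← hts]; exact inv_ne_zero hN
    rw [hN2]
    field_simp
    ring
  rw [Finset.sum_congr rfl fun i _ => inner i]
  simp only [Finset.sum_add_distrib, Finset.sum_sub_distrib, ← Finset.mul_sum]
  rw [Sde F hhol z, Sdq F hhol z, Spe F hhol z, Spq F z, Sqp F z]
  generalize hts : (Nfun F z)⁻¹ = t
  have hN2 : Nfun F z = t⁻¹ := by rw [← hts, inv_inv]
  have ht : t ≠ 0 := by rw [← hts]; exact inv_ne_zero hN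
  rw [hN2]
  field_simp
  ring

end diff
end MixedPairAux


open MixedPairAux in
set_option maxHeartbeats 1000000 in
/-- If `ψ = conj(f₀) ⊕ f₀ : S² → G(2,n;ℝ)` is the real mixed pair built
from a holomorphic curve `f₀ : S² → ℂPᵐ` (lift `F`, with `⟨F, conj F⟩ = 0`), realized as
the orthogonal projection `ψ = (F F* + F̄ F̄*)/|F|²`, then the induced metric
`-tr(A_z A_z̄) dz dz̄` (with `A_z = (2ψ - I)∂ψ`) equals `2 l₀ dz dz̄`, where
`l₀ = ∂∂̄ log |F|²` is the induced metric of `f₀`; consequently, if `f₀` has constant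
curvature, i.e. `l₀ = m/(1+|z|²)²` (Veronese), then `ψ` has constant Gaussian curvature
`K = 2/m`. -/
theorem mixedPair_metric_and_curvature (n m : ℕ) (F : ℂ → Fin n → ℂ)
    (hhol : ∀ i, Differentiable ℂ fun z => F z i)
    (hnz : ∀ z, F z ≠ 0)
    (hiso : ∀ z, ∑ i, F z i * F z i = 0) :
    let nsq : ℂ → ℝ := fun z => ∑ i, Complex.normSq (F z i)
    let ψ : ℂ → Matrix (Fin n) (Fin n) ℂ := fun z =>
      ((nsq z : ℂ))⁻¹ •
        (vecMulVec (F z) (star (F z)) + vecMulVec (star (F z)) (F z))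
    let Az : ℂ → Matrix (Fin n) (Fin n) ℂ := fun z =>
      (2 • ψ z - 1) * Matrix.of fun i j => wirt (fun w => ψ w i j) z
    let Azbar : ℂ → Matrix (Fin n) (Fin n) ℂ := fun z =>
      (2 • ψ z - 1) * Matrix.of fun i j => wirtbar (fun w => ψ w i j) z
    let l0 : ℂ → ℂ := fun z => wirt (wirtbar (fun u => (Real.log (nsq u) : ℂ))) z
    (∀ z, -Matrix.trace (Az z * Azbar z) = 2 * l0 z) ∧
    ((∀ z, l0 z = (m : ℂ) / (1 + ‖z‖ ^ 2) ^ 2) →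
      ∀ z, (-2) / (2 * l0 z) * wirt (wirtbar (fun u => Complex.log (2 * l0 u))) z
        = 2 / (m : ℂ)) := by
  intro nsq ψ Az Azbar l0
  have hψe : ∀ (w : ℂ) (i j : Fin n), ψ w i j = psiE F w i j := by
    intro w i j
    simp only [ψ, nsq, Matrix.smul_apply, Matrix.add_apply, Matrix.vecMulVec_apply,
      Pi.star_apply, RCLike.star_def, smul_eq_mul, psiE]
    rw [Nfun_cast F w]
  have hl0 : ∀ z, l0 z = bfun F z * (Nfun F z)⁻¹
      - (starRingEnd ℂ) (afun F z) * afun F z * ((Nfun F z)⁻¹ * (Nfun F z)⁻¹) := by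
    intro z
    simp only [l0, nsq]
    exact l0_val F hhol hnz z
  constructor
  · -- Part 1
    intro z
    have hN := Nfun_ne F hnz z
    simp only [Az, Azbar]
    set P : Matrix (Fin n) (Fin n) ℂ := Matrix.of fun i j => psiE F z i j with hPdef
    set D : Matrix (Fin n) (Fin n) ℂ :=
      Matrix.of fun i j => wirt (fun w => psiE F w i j) z with hDdef
    set Db : Matrix (Fin n) (Fin n) ℂ :=
      Matrix.of fun i j => wirtbar (fun w => psiE F w i j) z with hDbdef
    have hψm : ψ z = P := by ext i j; exact hψe z i j
    have hDm : (Matrix.of fun i j => wirt (fun w => ψ w i j) z) = D := by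
      ext i j
      exact wirt_congr (funext fun w => by rw [hψe w i j])
    have hDbm : (Matrix.of fun i j => wirtbar (fun w => ψ w i j) z) = Db := by
      ext i j
      refine congrArg (fun f => (1/2 : ℂ) * (fderiv ℝ f z 1 + Complex.I * fderiv ℝ f z Complex.I)) ?_
      exact funext fun w => hψe w i j
    rw [hψm, hDm, hDbm]
    have hP2 : P * P = P := by
      ext i j
      simp only [Matrix.mul_apply, hPdef, Matrix.of_apply]
      exact psi2 F hnz hiso z i j
    have hPD : P * D + D * P = D := by
      ext i j
      simp only [Matrix.add_apply, Matrix.mul_apply, hPdef, hDdef, Matrix.of_apply]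
      exact psiD_comm F hhol hnz hiso z i j
    have h2s : (2 : ℕ) • P = P + P := two_nsmul P
    have hanti : (2 • P - 1) * D = -(D * (2 • P - 1)) := by
      rw [h2s]
      have : (P + P - 1) * D + D * (P + P - 1) = 0 := by
        have expand : (P + P - 1) * D + D * (P + P - 1)
            = (P * D + D * P) + (P * D + D * P) - D - D := by noncomm_ring
        rw [expand, hPD]
        abel
      exact eq_neg_of_add_eq_zero_left this
    have hQ2 : (2 • P - 1) * (2 • P - 1) = 1 := by
      rw [h2s]
      have expand : (P + P - 1) * (P + P - 1)
          = (P * P) + (P * P) + (P * P) + (P * P) - P - P - P - P + 1 := by noncomm_ring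
      rw [expand, hP2]
      abel
    have hprod : (2 • P - 1) * D * ((2 • P - 1) * Db) = -(D * Db) := by
      rw [hanti, neg_mul, mul_assoc, ← mul_assoc (2 • P - 1), hQ2, one_mul]
    rw [hprod, Matrix.trace_neg, neg_neg]
    have htr : Matrix.trace (D * Db)
        = ∑ i, ∑ k, wirt (fun w => psiE F w i k) z * wirtbar (fun w => psiE F w k i) z := by
      simp [Matrix.trace, Matrix.diag, Matrix.mul_apply, hDdef, hDbdef]
    rw [htr, trace_DD F hhol hnz hiso z, hl0 z]
  · -- Part 2
    intro hl z
    by_cases hm : (m : ℂ) = 0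
    · have h0 : l0 z = 0 := by rw [hl z, hm, zero_div]
      rw [h0, hm]
      simp
    · have hm0 : m ≠ 0 := fun h => hm (by simp [h])
      have hmpos : (0:ℝ) < (m:ℝ) := by exact_mod_cast Nat.pos_of_ne_zero hm0
      have hgpos : ∀ u : ℂ, (0:ℝ) < 1 + Complex.normSq u := fun u =>
        add_pos_of_pos_of_nonneg one_pos (Complex.normSq_nonneg u)
      have hgcast : ∀ u : ℂ, ((1 + Complex.normSq u : ℝ) : ℂ) = 1 + u * (starRingEnd ℂ) u :=
        fun u => by push_cast [Complex.mul_conj]; ring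
      have hT0 : ∀ u : ℂ, (1 : ℂ) + u * (starRingEnd ℂ) u ≠ 0 := fun u => by
        rw [← hgcast]
        exact_mod_cast (hgpos u).ne'
      have hTdiff : ∀ u : ℂ, DifferentiableAt ℝ (fun v : ℂ => (1:ℂ) + v * (starRingEnd ℂ) v) u :=
        fun u => (differentiableAt_const _).add
          (differentiableAt_fun_id.fun_mul (diffAt_conj differentiableAt_fun_id))
      have hgdiff : ∀ u : ℂ, DifferentiableAt ℝ (fun v => 1 + Complex.normSq v) u := fun u => by
        have hre : (fun v : ℂ => 1 + Complex.normSq v)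
            = fun v : ℂ => ((1:ℂ) + v * (starRingEnd ℂ) v).re := by
          funext v
          rw [← hgcast]
          simp
        rw [hre]
        exact Complex.reCLM.differentiable.differentiableAt.comp u (hTdiff u)
      have hcast2 : ∀ u : ℂ, (2 : ℂ) * l0 u
          = ((2 * m / (1 + Complex.normSq u) ^ 2 : ℝ) : ℂ) := fun u => by
        rw [hl u, show ((‖u‖ : ℂ))^2 = ((Complex.normSq u : ℝ) : ℂ) from by
          rw [← Complex.ofReal_pow, Complex.sq_norm]]
        push_cast
        ring
      have hfeq : (fun u => Complex.log (2 * l0 u))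
          = fun u => ((Real.log (2 * m) : ℝ) : ℂ)
              - 2 * ((Real.log (1 + Complex.normSq u) : ℝ) : ℂ) := by
        funext u
        have h2m : (0:ℝ) < 2 * m := by linarith
        rw [hcast2 u, ← Complex.ofReal_log (div_nonneg h2m.le (by positivity))]
        have hlog : Real.log (2 * m / (1 + Complex.normSq u) ^ 2)
            = Real.log (2 * m) - 2 * Real.log (1 + Complex.normSq u) := by
          rw [Real.log_div h2m.ne' (pow_ne_zero 2 (hgpos u).ne'), Real.log_pow]
          push_cast
          ring
        rw [hlog]
        push_cast
        ring
      have hφdiff : ∀ w : ℂ,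
          DifferentiableAt ℝ (fun u => ((Real.log (1 + Complex.normSq u) : ℝ) : ℂ)) w := fun w =>
        Complex.ofRealCLM.differentiable.differentiableAt.comp w
          (by have := (Real.differentiableAt_log (hgpos w).ne').comp w (hgdiff w); exact this)
      have hbcid : ∀ w : ℂ, wirtbar (fun u : ℂ => (starRingEnd ℂ) u) w = 1 := fun w => by
        rw [wirtbar_conj differentiableAt_fun_id]
        rw [wirt_holo differentiableAt_fun_id]
        simp
      have hcid : ∀ w : ℂ, wirt (fun u : ℂ => (starRingEnd ℂ) u) w = 0 := fun w => by
        rw [wirt_conj differentiableAt_fun_id, wirtbar_holo differentiableAt_fun_id, map_zero]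
      have hwbT : ∀ w : ℂ, wirtbar (fun v : ℂ => (1:ℂ) + v * (starRingEnd ℂ) v) w = w :=
        fun w => by
        rw [wirtbar_add (differentiableAt_const _)
          (differentiableAt_fun_id.fun_mul (diffAt_conj differentiableAt_fun_id)), wirtbar_const]
        rw [wirtbar_mul differentiableAt_fun_id (diffAt_conj differentiableAt_fun_id)]
        rw [wirtbar_holo differentiableAt_fun_id, hbcid w]
        simp
      have hwT : wirt (fun v : ℂ => (1:ℂ) + v * (starRingEnd ℂ) v) z = (starRingEnd ℂ) z := by
        rw [wirt_add (differentiableAt_const _)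
          (differentiableAt_fun_id.fun_mul (diffAt_conj differentiableAt_fun_id)), wirt_const]
        rw [wirt_mul differentiableAt_fun_id (diffAt_conj differentiableAt_fun_id)]
        rw [wirt_holo differentiableAt_fun_id, hcid z]
        simp
      have hwb : wirtbar (fun u => ((Real.log (2*m) : ℝ) : ℂ)
            - 2 * ((Real.log (1 + Complex.normSq u) : ℝ) : ℂ))
          = fun w => (-2 : ℂ) * (w * ((1:ℂ) + w * (starRingEnd ℂ) w)⁻¹) := by
        funext w
        have hsub : (fun u => ((Real.log (2*m) : ℝ) : ℂ)
              - 2 * ((Real.log (1 + Complex.normSq u) : ℝ) : ℂ))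
            = fun u => ((Real.log (2*m) : ℝ) : ℂ)
              + (-2 : ℂ) * ((Real.log (1 + Complex.normSq u) : ℝ) : ℂ) := by
          funext u; ring
        rw [wirtbar_congr hsub]
        rw [wirtbar_add (differentiableAt_const _)
          ((differentiableAt_const (-2:ℂ)).fun_mul (hφdiff w)), wirtbar_const]
        rw [wirtbar_mul (differentiableAt_const (-2:ℂ)) (hφdiff w), wirtbar_const, zero_mul]
        rw [wirtbar_log_ofReal _ (hgdiff w) (hgpos w)]
        have hcoe : (fun u : ℂ => ((1 + Complex.normSq u : ℝ) : ℂ))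
            = fun u : ℂ => (1:ℂ) + u * (starRingEnd ℂ) u := funext fun u => hgcast u
        rw [wirtbar_congr hcoe, hwbT w, hgcast w]
        rw [div_eq_mul_inv]
        ring
      rw [show (fun u => Complex.log (2 * l0 u))
          = fun u => ((Real.log (2*m) : ℝ) : ℂ)
              - 2 * ((Real.log (1 + Complex.normSq u) : ℝ) : ℂ) from hfeq, hwb]
      rw [wirt_mul (differentiableAt_const (-2:ℂ))
        (differentiableAt_fun_id.fun_mul (diffAt_inv (hTdiff z) (hT0 z))), wirt_const, zero_mul]
      rw [wirt_mul differentiableAt_fun_id (diffAt_inv (hTdiff z) (hT0 z))]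
      rw [wirt_holo differentiableAt_fun_id, wirt_inv (hTdiff z) (hT0 z), hwT]
      rw [hl z]
      have habs : ((1:ℂ) + (‖z‖ : ℂ) ^ 2) = (1:ℂ) + z * (starRingEnd ℂ) z := by
        rw [show ((‖z‖ : ℂ))^2 = ((Complex.normSq z : ℝ) : ℂ) from by
          rw [← Complex.ofReal_pow, Complex.sq_norm], ← hgcast]
        push_cast
        ring
      rw [habs]
      have hder : deriv (fun w : ℂ => w) z = 1 := by simp
      rw [hder]
      field_simp [hT0 z]
      ring
end

section
/- Let f₀^{(m)}: S² → ℂP^m be a holomorphic curve with harmonic sequence f₀, f₁, ..., f_m (the f_i being the local sections defined by Frenet framing). Then ⟨f₀, conj(f₀)⟩ = 0 identically on S² if and only if ⟨f₁, conj(f₀)⟩ = 0 identically on S². -/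
/-!
Put `g = ∑ Fᵢ²` and `R = ∑ |Fᵢ|²`, so that `⟨f₁, f̄₀⟩ = g'/2 - (∂R / R) g`; this vanishes when
`g ≡ 0`. Conversely, if `R g' = 2 (∂R) g` then `∂(|g|² / R²) = 0`, so the real function
`|g|² / R²` is a constant `c`. If `c > 0`, then `g` has no zeros, and for every `w` the entire
function `p = ∑ Fᵢ wᵢ` satisfies `|p|² ≤ ‖w‖² R = ‖w‖² |g| / √c` by Cauchy–Schwarz, so `p² / g` is
constant by Liouville. Taking `w` orthogonal to `F z₀`, possible as `m ≥ 1`, forces `p ≡ 0`,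
contradicting linear fullness.
-/

noncomputable def reMulCLM (a : ℂ) : ℂ →L[ℝ] ℝ :=
  Complex.reCLM.comp ((ContinuousLinearMap.mul ℂ ℂ a).restrictScalars ℝ)

@[simp]
lemma reMulCLM_apply (a v : ℂ) : reMulCLM a v = (a * v).re := rfl

/-- `∂φ/∂z = a` at `z`: for real-valued `φ` the real differential is `v ↦ 2 re (a v)`. -/
def HasWirtingerDerivAt (φ : ℂ → ℝ) (a z : ℂ) : Prop :=
  HasFDerivAt φ (reMulCLM (2 * a)) z

lemma HasDerivAt.hasWirtingerDerivAt_normSq {f : ℂ → ℂ} {f' z : ℂ} (hf : HasDerivAt f f' z) :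
    HasWirtingerDerivAt (fun w => Complex.normSq (f w)) (starRingEnd ℂ (f z) * f') z := by
  have h := (hf.hasFDerivAt.restrictScalars ℝ).norm_sq
  simp only [← Complex.normSq_eq_norm_sq] at h
  refine h.congr_fderiv ?_
  ext v
  simp [Complex.inner]
  ring

namespace HasWirtingerDerivAt

variable {φ χ : ℂ → ℝ} {a b z : ℂ}

lemma fun_sum {ι : Type*} {s : Finset ι} {φ : ι → ℂ → ℝ} {a : ι → ℂ}
    (h : ∀ i ∈ s, HasWirtingerDerivAt (φ i) (a i) z) :
    HasWirtingerDerivAt (fun w => ∑ i ∈ s, φ i w) (∑ i ∈ s, a i) z := by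
  refine (HasFDerivAt.fun_sum h).congr_fderiv ?_
  ext v
  simp [Finset.mul_sum, Finset.sum_mul]

lemma pow (h : HasWirtingerDerivAt φ a z) (n : ℕ) :
    HasWirtingerDerivAt (fun w => φ w ^ n) (n * φ z ^ (n - 1) * a) z := by
  refine (HasFDerivAt.pow h n).congr_fderiv ?_
  ext v
  simp [← Complex.ofReal_pow, Complex.mul_re]
  ring

lemma div (hφ : HasWirtingerDerivAt φ a z) (hχ : HasWirtingerDerivAt χ b z) (hχz : χ z ≠ 0) :
    HasWirtingerDerivAt (fun w => φ w / χ w) ((χ z * a - φ z * b) / χ z ^ 2) z := by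
  have h := hφ.mul ((hasDerivAt_inv hχz).comp_hasFDerivAt z hχ)
  rw [show φ * (fun y => y⁻¹) ∘ χ = fun w => φ w / χ w from rfl] at h
  refine h.congr_fderiv ?_
  ext v
  simp [Complex.mul_re, ← Complex.ofReal_pow, Complex.div_ofReal_re, Complex.div_ofReal_im]
  field_simp
  ring

lemma isConst {φ : ℂ → ℝ} (h : ∀ z, HasWirtingerDerivAt φ 0 z) (z w : ℂ) : φ z = φ w := by
  refine is_const_of_fderiv_eq_zero (𝕜 := ℝ) (fun x => (h x).differentiableAt) (fun x => ?_) z w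
  rw [(h x).fderiv]
  ext v
  simp

end HasWirtingerDerivAt

lemma normSq_div_sq_eq_of_mul_deriv_eq {g g' A : ℂ → ℂ} {R : ℂ → ℝ}
    (hg : ∀ z, HasDerivAt g (g' z) z) (hR : ∀ z, HasWirtingerDerivAt R (A z) z)
    (hR0 : ∀ z, R z ≠ 0) (h : ∀ z, R z * g' z = 2 * A z * g z) (z w : ℂ) :
    Complex.normSq (g z) / R z ^ 2 = Complex.normSq (g w) / R w ^ 2 := by
  refine HasWirtingerDerivAt.isConst (φ := fun x => Complex.normSq (g x) / R x ^ 2)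
    (fun x => ?_) z w
  convert (hg x).hasWirtingerDerivAt_normSq.div ((hR x).pow 2) (pow_ne_zero 2 (hR0 x)) using 1
  have hx : (R x : ℂ) ≠ 0 := by exact_mod_cast hR0 x
  rw [eq_div_iff (by simpa using pow_ne_zero 2 hx), zero_mul, Complex.normSq_eq_conj_mul_self]
  push_cast
  linear_combination -(R x * starRingEnd ℂ (g x)) * h x

lemma eq_zero_of_sq_norm_le_mul_norm {p g : ℂ → ℂ} {C : ℝ} (hp : Differentiable ℂ p)
    (hg : Differentiable ℂ g) (hg0 : ∀ z, g z ≠ 0) (hle : ∀ z, ‖p z‖ ^ 2 ≤ C * ‖g z‖)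
    {z₀ : ℂ} (hz₀ : p z₀ = 0) (z : ℂ) : p z = 0 := by
  have hbdd : Bornology.IsBounded (Set.range fun w => p w ^ 2 / g w) := by
    refine isBounded_iff_forall_norm_le.2 ⟨C, ?_⟩
    rintro _ ⟨w, rfl⟩
    rw [norm_div, norm_pow, div_le_iff₀ (norm_pos_iff.2 (hg0 w))]
    exact hle w
  have hconst := ((hp.pow 2).div hg hg0).apply_eq_apply_of_bounded hbdd z z₀
  simpa [hz₀, hg0 z] using hconst

lemma norm_sum_mul_sq_le {ι : Type*} (s : Finset ι) (a b : ι → ℂ) :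
    ‖∑ i ∈ s, a i * b i‖ ^ 2 ≤ (∑ i ∈ s, ‖a i‖ ^ 2) * ∑ i ∈ s, ‖b i‖ ^ 2 := by
  calc ‖∑ i ∈ s, a i * b i‖ ^ 2 ≤ (∑ i ∈ s, ‖a i‖ * ‖b i‖) ^ 2 := by
        gcongr
        simpa only [norm_mul] using norm_sum_le s (fun i => a i * b i)
    _ ≤ _ := Finset.sum_mul_sq_le_sq_mul_sq s _ _

section
variable {ι : Type*} [Fintype ι]

lemma HasDerivAt.sum_mul_self {F : ℂ → ι → ℂ} {F' : ι → ℂ} {z : ℂ}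
    (hF : ∀ i, HasDerivAt (fun w => F w i) (F' i) z) :
    HasDerivAt (fun w => ∑ i, F w i * F w i) (2 * ∑ i, F' i * F z i) z := by
  refine (HasDerivAt.fun_sum fun i _ => (hF i).mul (hF i)).congr_deriv ?_
  rw [Finset.mul_sum]
  exact Finset.sum_congr rfl fun i _ => by ring

lemma HasDerivAt.hasWirtingerDerivAt_sum_normSq {F : ℂ → ι → ℂ} {F' : ι → ℂ} {z : ℂ}
    (hF : ∀ i, HasDerivAt (fun w => F w i) (F' i) z) :
    HasWirtingerDerivAt (fun w => ∑ i, Complex.normSq (F w i))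
      (∑ i, F' i * starRingEnd ℂ (F z i)) z := by
  simp only [mul_comm (F' _)]
  exact HasWirtingerDerivAt.fun_sum fun i _ => (hF i).hasWirtingerDerivAt_normSq

lemma sum_normSq_pos {u : ι → ℂ} (hu : u ≠ 0) : 0 < ∑ i, Complex.normSq (u i) := by
  obtain ⟨i, hi⟩ := Function.ne_iff.1 hu
  exact Finset.sum_pos' (fun j _ => Complex.normSq_nonneg _)
    ⟨i, Finset.mem_univ i, Complex.normSq_pos.2 hi⟩

lemma sum_mul_self_eq_zero_of_normSq_div_sq_const [Nontrivial ι] {F : ℂ → ι → ℂ}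
    (hF : ∀ i, Differentiable ℂ fun z => F z i) (hnz : ∀ z, F z ≠ 0)
    (hfull : ∀ v : ι → ℂ, (∀ z, ∑ i, F z i * starRingEnd ℂ (v i) = 0) → v = 0)
    (hconst : ∀ x y, Complex.normSq (∑ i, F x i * F x i) / (∑ i, Complex.normSq (F x i)) ^ 2 =
      Complex.normSq (∑ i, F y i * F y i) / (∑ i, Complex.normSq (F y i)) ^ 2)
    (z : ℂ) : ∑ i, F z i * F z i = 0 := by
  set g : ℂ → ℂ := fun z => ∑ i, F z i * F z i
  set R : ℂ → ℝ := fun z => ∑ i, Complex.normSq (F z i)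
  have hR : ∀ x, 0 < R x := fun x => sum_normSq_pos (hnz x)
  by_contra hz
  set c := Complex.normSq (g z) / R z ^ 2
  have hc : 0 < c := div_pos (Complex.normSq_pos.2 hz) (pow_pos (hR z) 2)
  have hnorm : ∀ x, ‖g x‖ = √c * R x := by
    intro x
    refine (sq_eq_sq₀ (norm_nonneg _) (by positivity [hR x])).1 ?_
    have hcx : c = Complex.normSq (g x) / R x ^ 2 := (hconst x z).symm
    rw [← Complex.normSq_eq_norm_sq, mul_pow, Real.sq_sqrt hc.le, hcx,
      div_mul_cancel₀ _ (pow_pos (hR x) 2).ne']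
  have hg0 : ∀ x, g x ≠ 0 := fun x hgx => by
    have h0 := hnorm x
    rw [hgx, norm_zero] at h0
    exact (mul_pos (Real.sqrt_pos.2 hc) (hR x)).ne h0
  obtain ⟨w, hw0, hw⟩ := exists_ne_zero_dotProduct_eq_zero (F z)
  have hpw : ∀ x, ∑ i, F x i * w i = 0 := by
    refine eq_zero_of_sq_norm_le_mul_norm (C := (∑ i, ‖w i‖ ^ 2) / √c)
      (Differentiable.fun_sum fun i _ => (hF i).mul_const (w i))
      (Differentiable.fun_sum fun i _ => (hF i).mul (hF i)) hg0 (fun x => ?_)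
      (z₀ := z) (by simpa [dotProduct, mul_comm] using hw)
    calc ‖∑ i, F x i * w i‖ ^ 2 ≤ (∑ i, ‖F x i‖ ^ 2) * ∑ i, ‖w i‖ ^ 2 :=
          norm_sum_mul_sq_le _ _ _
      _ = (∑ i, ‖w i‖ ^ 2) / √c * ‖g x‖ := by
          rw [hnorm x]
          simp only [R, Complex.normSq_eq_norm_sq]
          field_simp
  exact hw0 (star_eq_zero.1 (hfull (star w) (by simpa using hpw)))

end

/-- Let `f₀ : S² → ℂPᵐ` be a linearly full holomorphic curve with
nowhere-zero holomorphic lift `F : ℂ → ℂ^{m+1}`, and let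
`f₁ = ∂f₀ - (⟨∂f₀,f₀⟩_H/|f₀|²) f₀` be its first Frenet derivative. Then the bilinear
pairing `⟨f₀, conj f₀⟩ = Σ (f₀)ᵢ²` vanishes identically iff `⟨f₁, conj f₀⟩ = Σ (f₁)ᵢ (f₀)ᵢ`
vanishes identically. -/
theorem isotropy_f0_iff_f1 (m : ℕ) (hm : 1 ≤ m) (F : ℂ → Fin (m + 1) → ℂ)
    (hhol : ∀ i, Differentiable ℂ fun z => F z i)
    (hnz : ∀ z, F z ≠ 0)
    (hfull : ∀ v : Fin (m + 1) → ℂ,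
      (∀ z, ∑ i, F z i * starRingEnd ℂ (v i) = 0) → v = 0)
    (f1 : ℂ → Fin (m + 1) → ℂ)
    (hf1 : ∀ z i, f1 z i = deriv (fun w => F w i) z -
      ((∑ j, deriv (fun w => F w j) z * starRingEnd ℂ (F z j)) /
        ((∑ j, Complex.normSq (F z j) : ℝ) : ℂ)) * F z i) :
    (∀ z, ∑ i, F z i * F z i = 0) ↔ (∀ z, ∑ i, f1 z i * F z i = 0) := by
  set D : ℂ → Fin (m + 1) → ℂ := fun z i => deriv (fun w => F w i) z
  set g : ℂ → ℂ := fun z => ∑ i, F z i * F z i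
  set R : ℂ → ℝ := fun z => ∑ j, Complex.normSq (F z j)
  set A : ℂ → ℂ := fun z => ∑ j, D z j * starRingEnd ℂ (F z j)
  have hD : ∀ z i, HasDerivAt (fun w => F w i) (D z i) z := fun z i => (hhol i z).hasDerivAt
  have hg : ∀ z, HasDerivAt g (2 * ∑ i, D z i * F z i) z := fun z => HasDerivAt.sum_mul_self (hD z)
  have hR0 : ∀ z, R z ≠ 0 := fun z => (sum_normSq_pos (hnz z)).ne'
  have hpair : ∀ z, ∑ i, f1 z i * F z i = ∑ i, D z i * F z i - A z / R z * g z := by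
    intro z
    simp only [hf1, sub_mul, Finset.sum_sub_distrib, mul_assoc, ← Finset.mul_sum]
    rfl
  constructor
  · intro h z
    have hDF : 2 * ∑ i, D z i * F z i = 0 :=
      (hg z).unique (by simpa [g, h] using hasDerivAt_const z (0 : ℂ))
    rw [hpair, show g z = 0 from h z]
    simpa using hDF
  · intro h
    have : Nontrivial (Fin (m + 1)) := Fin.nontrivial_iff_two_le.2 (by omega)
    have hR : ∀ z, HasWirtingerDerivAt R (A z) z := fun z =>
      HasDerivAt.hasWirtingerDerivAt_sum_normSq (hD z)
    have hkey : ∀ z, R z * (2 * ∑ i, D z i * F z i) = 2 * A z * g z := fun z => by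
      have hDF := h z
      rw [hpair, sub_eq_zero] at hDF
      rw [hDF]
      field_simp [hR0 z]
    exact sum_mul_self_eq_zero_of_normSq_div_sq_const hhol hnz hfull
      (normSq_div_sq_eq_of_mul_deriv_eq hg hR hR0 hkey)
end

section
/- Define f₀^{(6)}: ℂ → ℂ^8 as in the paper's example (components (1+z⁶, i(1−z⁶), √6 z(1+z⁴), i√6 z(1−z⁴), √15 z²(−1+z²), i√15 z²(1+z²), √20 a z³, √20 b z³) with |a|² + |b|² = 1 chosen as a = √30/5 + i/√15, b = √15/5 − i√30/15). Then |f₀^{(6)}(z)|² = 2(1+|z|²)⁶ for all z ∈ ℂ, so the induced metric of the real mixed pair ψ = conj(f₀) ⊕ f₀ has constant Gaussian curvature 1/3. -/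
/-- The explicit degree-6 holomorphic curve `f₀⁽⁶⁾ : ℂ → ℂ⁸` of the paper's example,
with `a = √30/5 + i/√15` and `b = √15/5 − i√30/15`. -/
noncomputable def f06 (z : ℂ) : Fin 8 → ℂ :=
  ![1 + z ^ 6,
    Complex.I * (1 - z ^ 6),
    (Real.sqrt 6 : ℂ) * z * (1 + z ^ 4),
    Complex.I * (Real.sqrt 6 : ℂ) * z * (1 - z ^ 4),
    (Real.sqrt 15 : ℂ) * z ^ 2 * (-1 + z ^ 2),
    Complex.I * (Real.sqrt 15 : ℂ) * z ^ 2 * (1 + z ^ 2),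
    (Real.sqrt 20 : ℂ) * ((Real.sqrt 30 : ℂ) / 5 + Complex.I / (Real.sqrt 15 : ℂ)) * z ^ 3,
    (Real.sqrt 20 : ℂ) * ((Real.sqrt 15 : ℂ) / 5
      - Complex.I * (Real.sqrt 30 : ℂ) / 15) * z ^ 3]


section Aux
open Complex
lemma pairSq (w : ℂ) : normSq (1+w) + normSq (1-w) = 2 + 2*normSq w := by
  simp [Complex.normSq_apply]; ring

lemma normSq_a : normSq ((Real.sqrt 30 : ℂ) / 5 + Complex.I / (Real.sqrt 15 : ℂ)) = 19/15 := by
  have h30 : Real.sqrt 30 ^ 2 = 30 := Real.sq_sqrt (by norm_num)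
  have h15 : Real.sqrt 15 ^ 2 = 15 := Real.sq_sqrt (by norm_num)
  have h15' : Real.sqrt 15 ≠ 0 := by positivity
  simp [Complex.normSq_apply, Complex.div_re, Complex.div_im]
  field_simp
  nlinarith [h30, h15]

lemma normSq_b : normSq ((Real.sqrt 15 : ℂ) / 5 - Complex.I * (Real.sqrt 30 : ℂ) / 15) = 11/15 := by
  have h30 : Real.sqrt 30 ^ 2 = 30 := Real.sq_sqrt (by norm_num)
  have h15 : Real.sqrt 15 ^ 2 = 15 := Real.sq_sqrt (by norm_num)
  simp [Complex.normSq_apply, Complex.div_re, Complex.div_im]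
  nlinarith [h30, h15]

lemma f06_norm (z : ℂ) : ∑ j : Fin 8, ‖f06 z j‖ ^ 2 = 2 * (1 + ‖z‖ ^ 2) ^ 6 := by
  have h6 : (Real.sqrt 6 : ℝ) * Real.sqrt 6 = 6 := Real.mul_self_sqrt (by norm_num)
  have h15 : (Real.sqrt 15 : ℝ) * Real.sqrt 15 = 15 := Real.mul_self_sqrt (by norm_num)
  have h20 : (Real.sqrt 20 : ℝ) * Real.sqrt 20 = 20 := Real.mul_self_sqrt (by norm_num)
  simp only [f06, Fin.sum_univ_succ, Fin.sum_univ_zero, Matrix.cons_val_zero,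
    Matrix.cons_val_succ, Complex.sq_norm, add_zero]
  simp only [normSq_mul, normSq_I, normSq_ofReal, normSq_a, normSq_b, one_mul]
  have e1 := pairSq (z^6)
  have e2 := pairSq (z^4)
  have e3 := pairSq (z^2)
  have e3' : normSq (-1 + z^2) = normSq (1 - z^2) := by
    rw [show (-1 + z^2 : ℂ) = -(1 - z^2) by ring, normSq_neg]
  simp only [map_pow] at e1 e2 e3 ⊢
  rw [e3', h6, h15, h20]
  linear_combination e1 + 6*normSq z*e2 + 15*normSq z^2*e3

lemma wirt_eq {f : ℂ → ℂ} {L : ℂ →L[ℝ] ℂ} {z : ℂ} (h : HasFDerivAt f L z) :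
    wirt f z = (1 / 2) * (L 1 - Complex.I * L Complex.I) := by
  rw [wirt, h.fderiv]

lemma wirtbar_eq {f : ℂ → ℂ} {L : ℂ →L[ℝ] ℂ} {z : ℂ} (h : HasFDerivAt f L z) :
    wirtbar f z = (1 / 2) * (L 1 + Complex.I * L Complex.I) := by
  rw [wirtbar, h.fderiv]

noncomputable def Nmap (z : ℂ) : ℂ →L[ℝ] ℝ :=
  (2*z.re) • Complex.reCLM + (2*z.im) • Complex.imCLM

lemma hasFDerivAt_normSq (z : ℂ) : HasFDerivAt (fun u : ℂ => Complex.normSq u) (Nmap z) z := by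
  have h : HasFDerivAt (fun u : ℂ => u.re * u.re + u.im * u.im)
      ((Complex.reCLM z • (Complex.reCLM : ℂ →L[ℝ] ℝ) + Complex.reCLM z • Complex.reCLM)
        + (Complex.imCLM z • (Complex.imCLM : ℂ →L[ℝ] ℝ) + Complex.imCLM z • Complex.imCLM)) z :=
    (Complex.reCLM.hasFDerivAt.mul Complex.reCLM.hasFDerivAt).add
      (Complex.imCLM.hasFDerivAt.mul Complex.imCLM.hasFDerivAt)
  have hfun : (fun u : ℂ => Complex.normSq u) = fun u : ℂ => u.re * u.re + u.im * u.im := by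
    funext u; exact Complex.normSq_apply u
  rw [hfun]
  convert h using 1
  ext v <;> simp [Nmap] <;> ring

lemma d_pos (z : ℂ) : (0:ℝ) < 1 + Complex.normSq z := by
  have := Complex.normSq_nonneg z; linarith

lemma hasFDerivAt_d (z : ℂ) :
    HasFDerivAt (fun u : ℂ => 1 + Complex.normSq u) (Nmap z) z :=
  (hasFDerivAt_normSq z).const_add 1

/-- derivative of `u ↦ r + c·log(1+|u|²)` (ℂ-valued). -/
lemma hasFDerivAt_clog (c : ℂ) (r : ℝ) (z : ℂ) :
    HasFDerivAt (fun u : ℂ => (r:ℂ) + c * ((Real.log (1 + Complex.normSq u) : ℝ) : ℂ))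
      (c • (Complex.ofRealCLM.comp ((1 + Complex.normSq z)⁻¹ • Nmap z))) z := by
  have h1 : HasFDerivAt (fun u : ℂ => Real.log (1 + Complex.normSq u))
      ((1 + Complex.normSq z)⁻¹ • Nmap z) z :=
    (hasFDerivAt_d z).log (ne_of_gt (d_pos z))
  have h2 : HasFDerivAt (fun u : ℂ => ((Real.log (1 + Complex.normSq u) : ℝ) : ℂ))
      (Complex.ofRealCLM.comp ((1 + Complex.normSq z)⁻¹ • Nmap z)) z :=
    Complex.ofRealCLM.hasFDerivAt.comp z h1
  exact (hasFDerivAt_const_add_iff (r:ℂ)).2 (h2.const_mul c)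

lemma wirtbar_clog (c : ℂ) (r : ℝ) (z : ℂ) :
    wirtbar (fun u : ℂ => (r:ℂ) + c * ((Real.log (1 + Complex.normSq u) : ℝ) : ℂ)) z
      = c * z / ((1 + Complex.normSq z : ℝ) : ℂ) := by
  rw [wirtbar_eq (hasFDerivAt_clog c r z)]
  have hd : ((1 + Complex.normSq z : ℝ) : ℂ) ≠ 0 := by
    exact_mod_cast ne_of_gt (d_pos z)
  simp only [ContinuousLinearMap.smul_apply, ContinuousLinearMap.comp_apply,
    ContinuousLinearMap.add_apply, Nmap, Complex.ofRealCLM_apply, Complex.reCLM_apply,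
    Complex.imCLM_apply, Complex.I_re, Complex.I_im, Complex.one_re, Complex.one_im,
    smul_eq_mul]
  have hinv : ((1:ℂ) + (Complex.normSq z : ℂ)) * ((1:ℂ) + (Complex.normSq z : ℂ))⁻¹ = 1 := by
    apply mul_inv_cancel₀; push_cast at hd ⊢; exact hd
  rw [eq_div_iff hd]
  push_cast
  linear_combination (c * (z.re:ℂ) + c * Complex.I * (z.im:ℂ)) * hinv + c * (Complex.re_add_im z)

lemma wirt_cdiv (c : ℂ) (z : ℂ) :
    wirt (fun u : ℂ => c * u / ((1 + Complex.normSq u : ℝ) : ℂ)) z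
      = c / ((1 + Complex.normSq z : ℝ) : ℂ) ^ 2 := by
  have hw : ((1 + Complex.normSq z : ℝ) : ℂ) ≠ 0 := by
    exact_mod_cast ne_of_gt (d_pos z)
  have hden : HasFDerivAt (fun u : ℂ => ((1 + Complex.normSq u : ℝ) : ℂ))
      (Complex.ofRealCLM.comp (Nmap z)) z :=
    Complex.ofRealCLM.hasFDerivAt.comp z (hasFDerivAt_d z)
  have hinv : HasFDerivAt (fun u : ℂ => (((1 + Complex.normSq u : ℝ) : ℂ))⁻¹)
      ((-(ContinuousLinearMap.mulLeftRight ℝ ℂ (((1 + Complex.normSq z : ℝ) : ℂ))⁻¹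
          (((1 + Complex.normSq z : ℝ) : ℂ))⁻¹)).comp (Complex.ofRealCLM.comp (Nmap z))) z :=
    (hasFDerivAt_inv' hw).comp z hden
  have hnum : HasFDerivAt (fun u : ℂ => c * u) (c • (ContinuousLinearMap.id ℝ ℂ)) z :=
    (hasFDerivAt_id z).const_mul c
  have hG : HasFDerivAt (fun u : ℂ => c * u / ((1 + Complex.normSq u : ℝ) : ℂ))
      ((c * z) • ((-(ContinuousLinearMap.mulLeftRight ℝ ℂ (((1 + Complex.normSq z : ℝ) : ℂ))⁻¹
          (((1 + Complex.normSq z : ℝ) : ℂ))⁻¹)).comp (Complex.ofRealCLM.comp (Nmap z)))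
        + (((1 + Complex.normSq z : ℝ) : ℂ))⁻¹ • (c • (ContinuousLinearMap.id ℝ ℂ))) z := by
    have := hnum.mul hinv
    simpa [div_eq_mul_inv, Pi.mul_def] using this
  rw [wirt_eq hG]
  simp only [ContinuousLinearMap.add_apply, ContinuousLinearMap.smul_apply,
    ContinuousLinearMap.comp_apply, ContinuousLinearMap.neg_apply,
    ContinuousLinearMap.mulLeftRight_apply, ContinuousLinearMap.id_apply, Nmap,
    Complex.ofRealCLM_apply, Complex.reCLM_apply, Complex.imCLM_apply,
    Complex.I_re, Complex.I_im, Complex.one_re, Complex.one_im, smul_eq_mul]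
  have hinv1 : ((1:ℂ) + (Complex.normSq z : ℂ)) * ((1:ℂ) + (Complex.normSq z : ℂ))⁻¹ = 1 := by
    apply mul_inv_cancel₀; push_cast at hw ⊢; exact hw
  have hsq : (z.re:ℂ)^2 + (z.im:ℂ)^2 = (Complex.normSq z : ℂ) := by
    rw [Complex.normSq_apply]; push_cast; ring
  have hw' : ((1:ℂ) + (Complex.normSq z:ℂ)) ≠ 0 := by push_cast at hw ⊢; exact hw
  have hz2 : z * ((z.re:ℂ) - (z.im:ℂ) * Complex.I) = (Complex.normSq z : ℂ) := by
    have hc : (starRingEnd ℂ) z = (z.re:ℂ) - (z.im:ℂ) * Complex.I := by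
      apply Complex.ext <;> simp
    rw [← hc, Complex.mul_conj]
  rw [eq_div_iff (pow_ne_zero 2 hw)]
  push_cast
  field_simp [hw']
  linear_combination (-2*c) * hz2
    + (-(c*(1+(Complex.normSq z:ℂ)))) * Complex.I_sq

/-- The explicit degree-6 curve `f₀⁽⁶⁾` has `|f₀⁽⁶⁾(z)|² = 2(1+|z|²)⁶`
for all `z`, so the induced metric `λ² = 2 l₀` (with `l₀ = ∂∂̄ log |f₀⁽⁶⁾|²`) of the real
mixed pair `ψ = conj(f₀) ⊕ f₀` has constant Gaussian curvature
`K = -(2/λ²) ∂∂̄ log λ² = 1/3`. -/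
theorem f06_norm_and_curvature :
    (∀ z : ℂ, ∑ j : Fin 8, ‖f06 z j‖ ^ 2 = 2 * (1 + ‖z‖ ^ 2) ^ 6) ∧
    (let l0 : ℂ → ℂ := fun z =>
        wirt (wirtbar (fun u => (Real.log (∑ j : Fin 8, ‖f06 u j‖ ^ 2) : ℂ))) z
      ∀ z : ℂ, (-2) / (2 * l0 z) *
          wirt (wirtbar (fun u => Complex.log (2 * l0 u))) z = 1 / 3) := by
  refine ⟨f06_norm, ?_⟩
  intro l0
  -- canonical form of the inner log function
  have hF1 : (fun u : ℂ => (Real.log (∑ j : Fin 8, ‖f06 u j‖ ^ 2) : ℂ))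
      = fun u : ℂ => ((Real.log 2 : ℝ) : ℂ)
          + (6:ℂ) * ((Real.log (1 + Complex.normSq u) : ℝ) : ℂ) := by
    funext u
    rw [f06_norm u]
    rw [show ‖u‖ ^ 2 = Complex.normSq u from Complex.sq_norm u]
    rw [Real.log_mul (by norm_num) (pow_ne_zero 6 (ne_of_gt (d_pos u))), Real.log_pow]
    push_cast
    ring
  have hl0 : ∀ w : ℂ, l0 w = 6 / ((1 + Complex.normSq w : ℝ) : ℂ) ^ 2 := by
    intro w
    show wirt (wirtbar (fun u => (Real.log (∑ j : Fin 8, ‖f06 u j‖ ^ 2) : ℂ))) w = _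
    rw [hF1]
    have hb : wirtbar (fun u : ℂ => ((Real.log 2 : ℝ) : ℂ)
        + (6:ℂ) * ((Real.log (1 + Complex.normSq u) : ℝ) : ℂ))
        = fun u : ℂ => (6:ℂ) * u / ((1 + Complex.normSq u : ℝ) : ℂ) := by
      funext v; exact wirtbar_clog 6 (Real.log 2) v
    rw [hb, wirt_cdiv 6 w]
  intro z
  have hw : ((1 + Complex.normSq z : ℝ) : ℂ) ≠ 0 := by
    exact_mod_cast ne_of_gt (d_pos z)
  -- canonical form of log(2 l0)
  have hF2 : (fun u : ℂ => Complex.log (2 * l0 u))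
      = fun u : ℂ => ((Real.log 12 : ℝ) : ℂ)
          + (-2:ℂ) * ((Real.log (1 + Complex.normSq u) : ℝ) : ℂ) := by
    funext u
    rw [hl0 u]
    have hdu : (0:ℝ) < 1 + Complex.normSq u := d_pos u
    have : (2:ℂ) * (6 / ((1 + Complex.normSq u : ℝ) : ℂ) ^ 2)
        = ((12 / (1 + Complex.normSq u) ^ 2 : ℝ) : ℂ) := by
      push_cast; ring
    rw [this, ← Complex.ofReal_log (div_nonneg (by norm_num) (le_of_lt (pow_pos hdu 2)))]
    rw [Real.log_div (by norm_num) (ne_of_gt (pow_pos hdu 2)), Real.log_pow]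
    push_cast
    ring
  rw [hF2]
  have hb2 : wirtbar (fun u : ℂ => ((Real.log 12 : ℝ) : ℂ)
      + (-2:ℂ) * ((Real.log (1 + Complex.normSq u) : ℝ) : ℂ))
      = fun u : ℂ => (-2:ℂ) * u / ((1 + Complex.normSq u : ℝ) : ℂ) := by
    funext v; exact wirtbar_clog (-2) (Real.log 12) v
  rw [hb2, wirt_cdiv (-2) z, hl0 z]
  have hw' : ((1:ℂ) + (Complex.normSq z:ℂ)) ≠ 0 := by push_cast at hw ⊢; exact hw
  have h6 : ((6:ℂ) * 2) / ((1 + Complex.normSq z : ℝ) : ℂ) ^ 2 ≠ 0 := by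
    apply div_ne_zero (by norm_num) (pow_ne_zero 2 hw)
  field_simp
  ring
end Aux
end

section
/- There is no unitary matrix U ∈ U(8) such that the curve f(z) = U·(1, √2 z, z², 0, 0, 0, 0, 0)^T satisfies ⟨f(z), f(z)⟩ = 0 for all z (bilinear form) and is linearly full in Q₆; indeed, any such curve spans at most a 3-dimensional, hence at most 6-real-dimensional, subspace and cannot be linearly full in ℂ^8. More precisely: if W = U^T U and tr(W V₀^{(2)}(z) V₀^{(2)}(z)^T) = 0 for all z, where V₀^{(2)}(z) = (1, √2 z, z², 0,...,0)^T, then the image curve is contained in a proper subquadric (the case m = 2 does not occur). -/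
open Matrix

/-- There is no unitary `U ∈ U(8)` such that the curve
`f(z) = U · (1, √2 z, z², 0, …, 0)ᵀ` is isotropic (`⟨f(z), f(z)⟩ = Σ fᵢ(z)² = 0` for all
`z`) **and** linearly full in `ℂP⁷` (equivalently in `Q₆`): indeed the curve always lies
in a proper linear subspace (there is a nonzero vector Hermitian-orthogonal to its image),
so the case `m = 2` does not occur. -/
theorem m_eq_two_not_full (U : Matrix (Fin 8) (Fin 8) ℂ)
    (hU : U ∈ Matrix.unitaryGroup (Fin 8) ℂ) :
    let V0 : ℂ → Fin 8 → ℂ := fun z => ![1, (Real.sqrt 2 : ℂ) * z, z ^ 2, 0, 0, 0, 0, 0]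
    let f : ℂ → Fin 8 → ℂ := fun z => U.mulVec (V0 z)
    (∃ v : Fin 8 → ℂ, v ≠ 0 ∧ ∀ z, ∑ i, f z i * starRingEnd ℂ (v i) = 0) ∧
    ¬ ((∀ z, ∑ i, f z i * f z i = 0) ∧
        (∀ v : Fin 8 → ℂ, (∀ z, ∑ i, f z i * starRingEnd ℂ (v i) = 0) → v = 0)) := by
  intro V0 f
  have hsU : star U * U = 1 := hU.1
  set e : Fin 8 → ℂ := Pi.single 3 1 with he
  set v : Fin 8 → ℂ := U.mulVec e with hv
  have hvne : v ≠ 0 := by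
    intro h
    have : (star U).mulVec v = (star U).mulVec 0 := by rw [h]
    rw [hv, mulVec_mulVec, hsU, one_mulVec, mulVec_zero] at this
    have := congrFun this 3
    simp [he] at this
  have hzero : ∀ z, ∑ i, f z i * starRingEnd ℂ (v i) = 0 := by
    intro z
    have : ∑ i, f z i * starRingEnd ℂ (v i) = (U.mulVec (V0 z)) ⬝ᵥ star v := by
      simp [dotProduct, Pi.star_apply, mul_comm]
      rfl
    rw [this, hv, star_mulVec, dotProduct_comm, dotProduct_mulVec, vecMul_vecMul,
      ← star_eq_conjTranspose, hsU, vecMul_one]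
    simp [he, dotProduct, Pi.single_apply, V0]
  exact ⟨⟨v, hvne, hzero⟩, fun ⟨_, hfull⟩ => hvne (hfull v hzero)⟩
end
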